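/- Lemma 5.2: Let n ≥ 1 and let Ω ⊂ ℝ^{2n} be a bounded domain. Let F⃗ : Ω → ℝ^{2n} be a measurable vector field and let u, v : Ω → ℝ be Lipschitz. For ε ∈ ℝ set u_ε = u + ε(v − u). Suppose ε₁ ≠ ε₂ are real numbers such that N(u_{ε₁})(x) = N(u_{ε₂})(x) for Lebesgue-a.e. x ∈ Ω ∖ (S(u_{ε₁}) ∪ S(u_{ε₂})). Then for j = 1, 2 one has (∇u_{ε_j}(x) + F⃗(x))* · (∇v(x) − ∇u(x)) = 0 for Lebesgue-a.e. x ∈ Ω. -/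

import Mathlib

/-!
Write `G_j = ∇u_{ε_j} + F⃗`, so that `G₁ - G₂ = (ε₁ - ε₂) (∇v - ∇u)`. The form
`ω(G, H) = ⟪G*, H⟫` is alternating, since `G ↦ G*` is skew-adjoint, hence it vanishes on
parallel vectors. Agreeing normals put `G₁` and `G₂` on a common ray, so
`ω(G_j, ∇v - ∇u) = (ε₁ - ε₂)⁻¹ (ω(G_j, G₁) - ω(G_j, G₂)) = 0`.
-/

open MeasureTheory
open scoped RealInnerProductSpace ENNReal

/-- For `G⃗ = (g₁, g₂, …, g_{2n−1}, g_{2n}) ∈ ℝ^{2n}`,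
`G⃗* = (g₂, −g₁, g₄, −g₃, …, g_{2n}, −g_{2n−1})`. -/
noncomputable def starVec {n : ℕ} (G : EuclideanSpace ℝ (Fin (2 * n))) :
    EuclideanSpace ℝ (Fin (2 * n)) := WithLp.toLp 2 fun i : Fin (2 * n) =>
  if _ : i.val % 2 = 0 then G ⟨i.val + 1, by have := i.isLt; omega⟩
  else -G ⟨i.val - 1, by have := i.isLt; omega⟩

/-- The vector field `∇u_ε + F⃗` where `u_ε = u + ε (v − u)`, with the a.e. identity
`∇u_ε = ∇u + ε(∇v − ∇u)`. -/
noncomputable def gradSeg {n : ℕ} (u v : EuclideanSpace ℝ (Fin (2 * n)) → ℝ)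
    (F : EuclideanSpace ℝ (Fin (2 * n)) → EuclideanSpace ℝ (Fin (2 * n))) (ε : ℝ)
    (x : EuclideanSpace ℝ (Fin (2 * n))) : EuclideanSpace ℝ (Fin (2 * n)) :=
  gradient u x + ε • (gradient v x - gradient u x) + F x

/-- The singular set `S(u_ε) = {x ∈ Ω : ∇u_ε + F⃗ = 0}` of `u_ε = u + ε (v − u)`. -/
def singSetSeg {n : ℕ} (Ω : Set (EuclideanSpace ℝ (Fin (2 * n))))
    (u v : EuclideanSpace ℝ (Fin (2 * n)) → ℝ)
    (F : EuclideanSpace ℝ (Fin (2 * n)) → EuclideanSpace ℝ (Fin (2 * n))) (ε : ℝ) :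
    Set (EuclideanSpace ℝ (Fin (2 * n))) :=
  {x ∈ Ω | gradSeg u v F ε x = 0}

section StarVec

variable {n : ℕ}

def pairSwap (i : Fin (2 * n)) : Fin (2 * n) :=
  if _ : i.val % 2 = 0 then ⟨i.val + 1, by have := i.isLt; omega⟩
  else ⟨i.val - 1, by have := i.isLt; omega⟩

lemma val_pairSwap (i : Fin (2 * n)) :
    (pairSwap i).val = if i.val % 2 = 0 then i.val + 1 else i.val - 1 := by
  unfold pairSwap; split <;> rfl

lemma pairSwap_involutive : Function.Involutive (pairSwap (n := n)) := fun i ↦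
  Fin.ext <| by simp only [val_pairSwap]; split <;> split <;> omega

lemma val_pairSwap_mod_two (i : Fin (2 * n)) :
    (pairSwap i).val % 2 = 0 ↔ ¬ i.val % 2 = 0 := by
  rw [val_pairSwap]; split <;> omega

lemma starVec_apply (G : EuclideanSpace ℝ (Fin (2 * n))) (i : Fin (2 * n)) :
    starVec G i = if i.val % 2 = 0 then G (pairSwap i) else -G (pairSwap i) := by
  simp only [starVec, pairSwap, PiLp.toLp_apply]
  split <;> rfl

lemma inner_starVec_left (G H : EuclideanSpace ℝ (Fin (2 * n))) :
    ⟪starVec G, H⟫ = -⟪G, starVec H⟫ := by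
  simp only [PiLp.inner_apply, RCLike.inner_apply, conj_trivial, ← Finset.sum_neg_distrib]
  rw [← Equiv.sum_comp (pairSwap_involutive.toPerm _)]
  refine Finset.sum_congr rfl fun i _ ↦ ?_
  simp only [Function.Involutive.coe_toPerm, starVec_apply, val_pairSwap_mod_two,
    pairSwap_involutive i]
  split_ifs <;> ring

lemma inner_starVec_self (G : EuclideanSpace ℝ (Fin (2 * n))) : ⟪starVec G, G⟫ = 0 := by
  linarith [inner_starVec_left G G, real_inner_comm G (starVec G)]

lemma starVec_smul (c : ℝ) (G : EuclideanSpace ℝ (Fin (2 * n))) :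
    starVec (c • G) = c • starVec G := by
  ext i
  simp only [starVec_apply, PiLp.smul_apply, smul_eq_mul]
  split <;> ring

lemma SameRay.inner_starVec_eq_zero {G H : EuclideanSpace ℝ (Fin (2 * n))}
    (h : SameRay ℝ G H) : ⟪starVec G, H⟫ = 0 := by
  obtain ⟨u, a, b, -, -, -, rfl, rfl⟩ := h.exists_eq_smul
  rw [starVec_smul, real_inner_smul_left, real_inner_smul_right, inner_starVec_self]
  ring

lemma SameRay.inner_starVec_eq_zero_of_sub_eq_smul {G₁ G₂ w : EuclideanSpace ℝ (Fin (2 * n))}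
    (h : SameRay ℝ G₁ G₂) {c : ℝ} (hc : c ≠ 0) (hw : G₁ - G₂ = c • w) :
    ⟪starVec G₁, w⟫ = 0 ∧ ⟪starVec G₂, w⟫ = 0 := by
  rw [eq_inv_smul_iff₀ hc |>.mpr hw.symm]
  simp only [real_inner_smul_right, inner_sub_right, inner_starVec_self, h.inner_starVec_eq_zero,
    h.symm.inner_starVec_eq_zero, sub_self, mul_zero, and_self]

end StarVec

lemma measurable_gradient {E : Type*} [NormedAddCommGroup E] [InnerProductSpace ℝ E]
    [CompleteSpace E] [MeasurableSpace E] [BorelSpace E] (f : E → ℝ) :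
    Measurable (gradient f) :=
  (InnerProductSpace.toDual ℝ E).symm.continuous.measurable.comp (measurable_fderiv ℝ f)

section GradSeg

variable {n : ℕ} {u v : EuclideanSpace ℝ (Fin (2 * n)) → ℝ}
  {F : EuclideanSpace ℝ (Fin (2 * n)) → EuclideanSpace ℝ (Fin (2 * n))}

lemma measurable_gradSeg (hF : Measurable F) (ε : ℝ) : Measurable (gradSeg u v F ε) :=
  ((measurable_gradient u).add
    (((measurable_gradient v).sub (measurable_gradient u)).const_smul ε)).add hF

lemma gradSeg_sub_gradSeg (ε₁ ε₂ : ℝ) (x : EuclideanSpace ℝ (Fin (2 * n))) :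
    gradSeg u v F ε₁ x - gradSeg u v F ε₂ x = (ε₁ - ε₂) • (gradient v x - gradient u x) := by
  simp only [gradSeg]
  module

lemma ae_sameRay_gradSeg {μ : Measure (EuclideanSpace ℝ (Fin (2 * n)))}
    {Ω : Set (EuclideanSpace ℝ (Fin (2 * n)))} (hF : Measurable F) {ε₁ ε₂ : ℝ}
    (hagree : ∀ᵐ x ∂(μ.restrict (Ω \ (singSetSeg Ω u v F ε₁ ∪ singSetSeg Ω u v F ε₂))),
      ‖gradSeg u v F ε₁ x‖⁻¹ • gradSeg u v F ε₁ x =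
        ‖gradSeg u v F ε₂ x‖⁻¹ • gradSeg u v F ε₂ x) :
    ∀ᵐ x ∂(μ.restrict Ω), SameRay ℝ (gradSeg u v F ε₁ x) (gradSeg u v F ε₂ x) := by
  set s := {x | gradSeg u v F ε₁ x ≠ 0 ∧ gradSeg u v F ε₂ x ≠ 0}
  have hs : MeasurableSet s :=
    (measurable_gradSeg hF ε₁ (measurableSet_singleton 0).compl).inter
      (measurable_gradSeg hF ε₂ (measurableSet_singleton 0).compl)
  have hΩs : Ω \ (singSetSeg Ω u v F ε₁ ∪ singSetSeg Ω u v F ε₂) = s ∩ Ω := by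
    ext x
    simp only [singSetSeg, Set.mem_sdiff, Set.mem_union, Set.mem_ofPred_eq, Set.mem_inter_iff, s]
    tauto
  rw [hΩs, ← Measure.restrict_restrict hs, ae_restrict_iff' hs] at hagree
  filter_upwards [hagree] with x hx
  rw [sameRay_iff_inv_norm_smul_eq]
  tauto

end GradSeg

theorem star_inner_eq_zero_of_normals_agree_general {n : ℕ}
    (Ω : Set (EuclideanSpace ℝ (Fin (2 * n))))
    (F : EuclideanSpace ℝ (Fin (2 * n)) → EuclideanSpace ℝ (Fin (2 * n)))
    (hFmeas : Measurable F)
    (u v : EuclideanSpace ℝ (Fin (2 * n)) → ℝ)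
    (ε₁ ε₂ : ℝ) (hne : ε₁ ≠ ε₂)
    (hagree : ∀ᵐ x ∂(volume.restrict
        (Ω \ (singSetSeg Ω u v F ε₁ ∪ singSetSeg Ω u v F ε₂))),
      ‖gradSeg u v F ε₁ x‖⁻¹ • gradSeg u v F ε₁ x =
        ‖gradSeg u v F ε₂ x‖⁻¹ • gradSeg u v F ε₂ x) :
    (∀ᵐ x ∂(volume.restrict Ω),
        ⟪starVec (gradSeg u v F ε₁ x), gradient v x - gradient u x⟫ = 0) ∧
    (∀ᵐ x ∂(volume.restrict Ω),
        ⟪starVec (gradSeg u v F ε₂ x), gradient v x - gradient u x⟫ = 0) := by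
  have hray := ae_sameRay_gradSeg hFmeas hagree
  have key x (hx : SameRay ℝ (gradSeg u v F ε₁ x) (gradSeg u v F ε₂ x)) :=
    hx.inner_starVec_eq_zero_of_sub_eq_smul (sub_ne_zero.mpr hne) (gradSeg_sub_gradSeg ε₁ ε₂ x)
  exact ⟨hray.mono fun x hx ↦ (key x hx).1, hray.mono fun x hx ↦ (key x hx).2⟩

/-- **Lemma 5.2**: if the unit normals `N(u_{ε₁})` and `N(u_{ε₂})` agree a.e. on
`Ω ∖ (S(u_{ε₁}) ∪ S(u_{ε₂}))` for some `ε₁ ≠ ε₂`, then for `j = 1, 2`,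
`(∇u_{ε_j} + F⃗)* · (∇v − ∇u) = 0` a.e. in `Ω`. -/
theorem star_inner_eq_zero_of_normals_agree {n : ℕ} (hn : 1 ≤ n)
    (Ω : Set (EuclideanSpace ℝ (Fin (2 * n))))
    (hΩopen : IsOpen Ω) (hΩbdd : Bornology.IsBounded Ω)
    (hΩne : Ω.Nonempty) (hΩconn : IsConnected Ω)
    (F : EuclideanSpace ℝ (Fin (2 * n)) → EuclideanSpace ℝ (Fin (2 * n)))
    (hFmeas : Measurable F)
    (u v : EuclideanSpace ℝ (Fin (2 * n)) → ℝ)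
    (hu : ∃ K, LipschitzOnWith K u Ω) (hv : ∃ K, LipschitzOnWith K v Ω)
    (ε₁ ε₂ : ℝ) (hne : ε₁ ≠ ε₂)
    (hagree : ∀ᵐ x ∂(volume.restrict
        (Ω \ (singSetSeg Ω u v F ε₁ ∪ singSetSeg Ω u v F ε₂))),
      ‖gradSeg u v F ε₁ x‖⁻¹ • gradSeg u v F ε₁ x =
        ‖gradSeg u v F ε₂ x‖⁻¹ • gradSeg u v F ε₂ x) :
    (∀ᵐ x ∂(volume.restrict Ω),
        ⟪starVec (gradSeg u v F ε₁ x), gradient v x - gradient u x⟫ = 0) ∧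
    (∀ᵐ x ∂(volume.restrict Ω),
        ⟪starVec (gradSeg u v F ε₂ x), gradient v x - gradient u x⟫ = 0) :=
  star_inner_eq_zero_of_normals_agree_general Ω F hFmeas u v ε₁ ε₂ hne hagree
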